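/- arXiv:2301.07149 — 3 statements merged into one kernel-verified Lean document; each statement's English description precedes it below -/
import Mathlib

section
/- For the balloon graph with k ≥ 1 pumpkin edges of length 1 and one pendant edge of length 1 with a Dirichlet endpoint, the eigenvalue ratio λ₂/λ₁ = (π/arctan(1/√k) − 1)², which equals 25 when k = 3, and satisfies (λ₂/λ₁)/k → π² as k → ∞. -/
open Real Filter

lemma arctan_sqrt3 : Real.arctan (1 / Real.sqrt 3) = π / 6 := by
  rw [← Real.tan_pi_div_six]
  exact Real.arctan_tan (by linarith [Real.pi_pos]) (by linarith [Real.pi_pos])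

lemma arctan_pos_of (k : ℕ) (hk : 1 ≤ k) : 0 < Real.arctan (1 / Real.sqrt (k : ℝ)) := by
  have : (0:ℝ) < 1 / Real.sqrt (k : ℝ) := by positivity
  simpa using Real.arctan_strictMono this

/-- Balloon graph: with `λ₁(k) = (arctan(1/√k))²` and `λ₂(k) = (π - arctan(1/√k))²`,
the ratio is `(π/arctan(1/√k) - 1)²`, equals `25` for `k = 3`, and satisfies
`(λ₂/λ₁)/k → π²` as `k → ∞`. -/
theorem balloon_ratio :
    (∀ k : ℕ, 1 ≤ k →
      (π - Real.arctan (1 / Real.sqrt (k : ℝ))) ^ 2 /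
        (Real.arctan (1 / Real.sqrt (k : ℝ))) ^ 2 =
      (π / Real.arctan (1 / Real.sqrt (k : ℝ)) - 1) ^ 2) ∧
    (π - Real.arctan (1 / Real.sqrt (3 : ℝ))) ^ 2 /
        (Real.arctan (1 / Real.sqrt (3 : ℝ))) ^ 2 = 25 ∧
    Tendsto (fun k : ℕ =>
        (π - Real.arctan (1 / Real.sqrt (k : ℝ))) ^ 2 /
          (Real.arctan (1 / Real.sqrt (k : ℝ))) ^ 2 / (k : ℝ))
      atTop (nhds (π ^ 2)) := by
  refine ⟨?_, ?_, ?_⟩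
  · intro k hk
    have h := (arctan_pos_of k hk).ne'
    field_simp
  · rw [arctan_sqrt3]
    have h := Real.pi_ne_zero
    field_simp
    ring
  · -- limit
    have ha0 : Tendsto (fun k : ℕ => Real.arctan (1 / Real.sqrt (k : ℝ))) atTop
        (nhds 0) := by
      have : Tendsto (fun k : ℕ => 1 / Real.sqrt (k : ℝ)) atTop (nhds 0) := by
        apply Tendsto.comp (tendsto_inv_atTop_zero.congr (by simp [one_div]))
        have hs : Tendsto Real.sqrt atTop atTop := by
          apply tendsto_atTop_atTop.mpr
          intro b
          refine ⟨max 0 b ^ 2, fun a ha => ?_⟩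
          calc b ≤ max 0 b := le_max_right _ _
          _ = Real.sqrt (max 0 b ^ 2) := (Real.sqrt_sq (le_max_left _ _)).symm
          _ ≤ Real.sqrt a := Real.sqrt_le_sqrt ha
        exact hs.comp tendsto_natCast_atTop_atTop
      simpa [Function.comp_def] using (Real.continuous_arctan.tendsto 0).comp this
    have ha0' : Tendsto (fun k : ℕ => Real.arctan (1 / Real.sqrt (k : ℝ))) atTop
        (nhdsWithin 0 {(0:ℝ)}ᶜ) := by
      rw [tendsto_nhdsWithin_iff]
      refine ⟨ha0, ?_⟩
      filter_upwards [eventually_ge_atTop 1] with k hk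
      exact (arctan_pos_of k hk).ne'
    have htan : Tendsto (fun x : ℝ => Real.tan x / x) (nhdsWithin 0 {(0:ℝ)}ᶜ)
        (nhds 1) := by
      have h := Real.hasDerivAt_tan (x := 0) (by simp)
      rw [hasDerivAt_iff_tendsto_slope] at h
      simp only [Real.cos_zero, one_pow, div_one] at h
      refine h.congr' ?_
      filter_upwards [self_mem_nhdsWithin] with x hx
      simp [slope_def_field, Real.tan_zero]
    have key : Tendsto (fun k : ℕ =>
        ((π - Real.arctan (1 / Real.sqrt (k : ℝ))) *
          (Real.tan (Real.arctan (1 / Real.sqrt (k : ℝ))) /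
            Real.arctan (1 / Real.sqrt (k : ℝ)))) ^ 2) atTop (nhds (π ^ 2)) := by
      have h1 : Tendsto (fun k : ℕ => π - Real.arctan (1 / Real.sqrt (k : ℝ)))
          atTop (nhds π) := by simpa using (tendsto_const_nhds.sub ha0)
      have h2 := htan.comp ha0'
      have := (h1.mul h2).pow 2
      simpa using this
    refine key.congr' ?_
    filter_upwards [eventually_ge_atTop 1] with k hk
    have hkpos : (0:ℝ) < (k:ℝ) := by exact_mod_cast Nat.pos_of_ne_zero (by omega)
    have ha := (arctan_pos_of k hk).ne'
    have hsq : (1 / Real.sqrt (k:ℝ)) ^ 2 = 1 / (k:ℝ) := by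
      rw [div_pow, one_pow, Real.sq_sqrt hkpos.le]
    rw [Real.tan_arctan, mul_pow, div_pow, hsq, div_div, div_div, mul_one_div,
      mul_comm ((Real.arctan (1 / Real.sqrt (k:ℝ))) ^ 2) (k:ℝ)]
end

section
/- Weighted Cheeger-type inequality on an interval: let φ : [0, L] → ℝ be continuous and positive on (0, L], let f : [0, L] → ℝ be C¹ with ∫₀ᴸ f φ² = 0. Define h_φ = inf over finite sets S ⊂ (0,L) separating [0,L] into two nonempty open parts Y₁, Y₂ of (∑_{s∈S} φ(s)²)/min(∫_{Y₁} φ², ∫_{Y₂} φ²). Then ∫₀ᴸ (f')² φ² ≥ (h_φ²/4) ∫₀ᴸ f² φ². -/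
open Real Set MeasureTheory

/-- One-sided Cheeger estimate: integration by parts against a weight `W` whose
derivative is `-φ²`, with vanishing boundary term, followed by pointwise AM–GM. -/
private lemma cheeger_side (h a b : ℝ) (hab : a < b) (hh : 0 < h)
    (φ g W : ℝ → ℝ) (hφc : ContinuousOn φ (Icc a b))
    (hg : ContDiff ℝ 1 g)
    (hWc : ContinuousOn W (Icc a b))
    (hW' : ∀ t ∈ Ioo a b, HasDerivAt W (-(φ t ^ 2)) t)
    (hbound : ∀ s ∈ Icc a b, h * |W s| ≤ φ s ^ 2)
    (hends : g b ^ 2 * W b - g a ^ 2 * W a = 0) :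
    h ^ 2 / 4 * ∫ x in a..b, g x ^ 2 * φ x ^ 2 ≤
      ∫ x in a..b, (deriv g x) ^ 2 * φ x ^ 2 := by
  have hgc : Continuous g := hg.continuous
  have hg'c : Continuous (deriv g) := hg.continuous_deriv le_rfl
  have huIcc : uIcc a b = Icc a b := uIcc_of_le hab.le
  have hφ2 : ContinuousOn (fun x => φ x ^ 2) (Icc a b) := hφc.pow 2
  have hA : IntervalIntegrable (fun x => g x ^ 2 * φ x ^ 2) volume a b := by
    apply ContinuousOn.intervalIntegrable
    rw [huIcc]
    exact ((hgc.continuousOn).pow 2).mul hφ2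
  have hD : IntervalIntegrable (fun x => (deriv g x) ^ 2 * φ x ^ 2) volume a b := by
    apply ContinuousOn.intervalIntegrable
    rw [huIcc]
    exact ((hg'c.continuousOn).pow 2).mul hφ2
  have hGW : IntervalIntegrable (fun x => 2 * g x * deriv g x * W x) volume a b := by
    apply ContinuousOn.intervalIntegrable
    rw [huIcc]
    exact (((continuousOn_const.mul hgc.continuousOn).mul hg'c.continuousOn)).mul hWc
  -- integration by parts
  have hPc : ContinuousOn (fun t => g t ^ 2 * W t) (Icc a b) :=
    ((hgc.continuousOn).pow 2).mul hWc
  have hP : ∀ x ∈ Ioo a b, HasDerivAt (fun t => g t ^ 2 * W t)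
      (2 * g x * deriv g x * W x - g x ^ 2 * φ x ^ 2) x := by
    intro x hx
    have hgx : HasDerivAt g (deriv g x) x :=
      ((hg.differentiable one_ne_zero) x).hasDerivAt
    have h2 : HasDerivAt (fun t => g t ^ 2) (2 * g x * deriv g x) x := by
      have h2' := hgx.pow 2
      simp at h2'
      exact h2'
    have hmul := h2.mul (hW' x hx)
    have heq : 2 * g x * deriv g x * W x - g x ^ 2 * φ x ^ 2
        = 2 * g x * deriv g x * W x + g x ^ 2 * (-(φ x ^ 2)) := by ring
    rw [heq]
    exact hmul
  have hFTC : ∫ x in a..b, (2 * g x * deriv g x * W x - g x ^ 2 * φ x ^ 2) = 0 := by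
    rw [intervalIntegral.integral_eq_sub_of_hasDerivAt_of_le hab.le hPc hP (hGW.sub hA)]
    simpa using hends
  rw [intervalIntegral.integral_sub hGW hA] at hFTC
  have hAeq : (∫ x in a..b, g x ^ 2 * φ x ^ 2)
      = ∫ x in a..b, 2 * g x * deriv g x * W x := by linarith
  -- pointwise AM–GM bound
  have hh2 : (0 : ℝ) < h ^ 2 := by positivity
  have hpt : ∀ x ∈ Icc a b, 2 * g x * deriv g x * W x ≤
      1 / 2 * (g x ^ 2 * φ x ^ 2) + 2 / h ^ 2 * ((deriv g x) ^ 2 * φ x ^ 2) := by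
    intro x hx
    have hb := hbound x hx
    have h1 : 2 * g x * deriv g x * W x ≤ 2 * |g x| * |deriv g x| * |W x| := by
      calc 2 * g x * deriv g x * W x ≤ |2 * g x * deriv g x * W x| := le_abs_self _
        _ = 2 * |g x| * |deriv g x| * |W x| := by
            rw [abs_mul, abs_mul, abs_mul, abs_two]
    have main : h ^ 2 * (2 * g x * deriv g x * W x) ≤
        h ^ 2 * (1 / 2 * (g x ^ 2 * φ x ^ 2) + 2 / h ^ 2 * ((deriv g x) ^ 2 * φ x ^ 2)) := by
      have hexp : h ^ 2 * (1 / 2 * (g x ^ 2 * φ x ^ 2) + 2 / h ^ 2 * ((deriv g x) ^ 2 * φ x ^ 2))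
          = h ^ 2 * (g x ^ 2 * φ x ^ 2) / 2 + 2 * ((deriv g x) ^ 2 * φ x ^ 2) := by
        field_simp
      rw [hexp]
      calc h ^ 2 * (2 * g x * deriv g x * W x)
          ≤ h ^ 2 * (2 * |g x| * |deriv g x| * |W x|) :=
            mul_le_mul_of_nonneg_left h1 (by positivity)
        _ = (2 * |g x| * |deriv g x| * h) * (h * |W x|) := by ring
        _ ≤ (2 * |g x| * |deriv g x| * h) * φ x ^ 2 :=
            mul_le_mul_of_nonneg_left hb (by positivity)
        _ ≤ (h ^ 2 * g x ^ 2 / 2 + 2 * (deriv g x) ^ 2) * φ x ^ 2 := by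
            have h2 : 2 * |g x| * |deriv g x| * h
                ≤ h ^ 2 * g x ^ 2 / 2 + 2 * (deriv g x) ^ 2 := by
              nlinarith [sq_nonneg (h * |g x| - 2 * |deriv g x|), sq_abs (g x),
                sq_abs (deriv g x)]
            exact mul_le_mul_of_nonneg_right h2 (sq_nonneg _)
        _ = h ^ 2 * (g x ^ 2 * φ x ^ 2) / 2 + 2 * ((deriv g x) ^ 2 * φ x ^ 2) := by ring
    exact le_of_mul_le_mul_left main hh2
  have hRHSint : IntervalIntegrable
      (fun x => 1 / 2 * (g x ^ 2 * φ x ^ 2) + 2 / h ^ 2 * ((deriv g x) ^ 2 * φ x ^ 2))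
      volume a b := (hA.const_mul _).add (hD.const_mul _)
  have hmono := intervalIntegral.integral_mono_on hab.le hGW hRHSint hpt
  rw [intervalIntegral.integral_add (hA.const_mul _) (hD.const_mul _),
    intervalIntegral.integral_const_mul, intervalIntegral.integral_const_mul] at hmono
  set A := ∫ x in a..b, g x ^ 2 * φ x ^ 2 with hAdef
  set D := ∫ x in a..b, (deriv g x) ^ 2 * φ x ^ 2 with hDdef
  have h5 : 1 / 2 * A ≤ 2 / h ^ 2 * D := by
    rw [← hAeq] at hmono
    linarith
  calc h ^ 2 / 4 * A = h ^ 2 / 2 * (1 / 2 * A) := by ring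
    _ ≤ h ^ 2 / 2 * (2 / h ^ 2 * D) := by
        exact mul_le_mul_of_nonneg_left h5 (by positivity)
    _ = D := by
        field_simp

/-- Weighted Cheeger-type inequality on an interval: if `φ` is continuous on `[0,L]`,
positive on `(0,L]`, and `f` is `C¹` with `∫₀ᴸ f φ² = 0`, then
`∫₀ᴸ (f')² φ² ≥ (h_φ²/4) ∫₀ᴸ f² φ²`, where `h_φ` is the infimum over cut points
`t ∈ (0,L)` of `φ(t)² / min(∫₀ᵗ φ², ∫ₜᴸ φ²)`. -/
theorem weighted_cheeger_interval (L : ℝ) (hL : 0 < L) (φ f : ℝ → ℝ)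
    (hφc : ContinuousOn φ (Icc 0 L))
    (hφpos : ∀ x ∈ Ioc 0 L, 0 < φ x)
    (hf : ContDiff ℝ 1 f)
    (hperp : ∫ x in (0:ℝ)..L, f x * φ x ^ 2 = 0) :
    let hφ := sInf {r : ℝ | ∃ t ∈ Ioo (0:ℝ) L,
        r = φ t ^ 2 / min (∫ x in (0:ℝ)..t, φ x ^ 2) (∫ x in t..L, φ x ^ 2)}
    (∫ x in (0:ℝ)..L, (deriv f x) ^ 2 * φ x ^ 2) ≥
      hφ ^ 2 / 4 * ∫ x in (0:ℝ)..L, f x ^ 2 * φ x ^ 2 := by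
  intro hφ
  have hφ2c : ContinuousOn (fun x => φ x ^ 2) (Icc 0 L) := hφc.pow 2
  -- integrability of φ² on subintervals
  have hφ2int : ∀ u v : ℝ, u ∈ Icc 0 L → v ∈ Icc 0 L →
      IntervalIntegrable (fun x => φ x ^ 2) volume u v := by
    intro u v hu hv
    exact (hφ2c.mono (uIcc_subset_Icc hu hv)).intervalIntegrable
  have h0L : (0:ℝ) ∈ Icc (0:ℝ) L := ⟨le_rfl, hL.le⟩
  have hLL : L ∈ Icc (0:ℝ) L := ⟨hL.le, le_rfl⟩
  set Ψ : ℝ → ℝ := fun s => ∫ x in (0:ℝ)..s, φ x ^ 2 with hΨdef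
  have hΨ0 : Ψ 0 = 0 := intervalIntegral.integral_same
  set T : ℝ := Ψ L with hTdef
  have hΨc : ContinuousOn Ψ (Icc 0 L) := by
    have := intervalIntegral.continuousOn_primitive_interval
      (f := fun x => φ x ^ 2) (a := 0) (b := L) (μ := volume)
      (by rw [uIcc_of_le hL.le]; exact hφ2c.integrableOn_Icc)
    rw [uIcc_of_le hL.le] at this
    exact this
  -- splitting formula
  have hsplit : ∀ s ∈ Icc (0:ℝ) L, (∫ x in s..L, φ x ^ 2) = T - Ψ s := by
    intro s hs
    have h := intervalIntegral.integral_add_adjacent_intervals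
      (hφ2int 0 s h0L hs) (hφ2int s L hs hLL)
    show (∫ x in s..L, φ x ^ 2)
      = (∫ x in (0:ℝ)..L, φ x ^ 2) - ∫ x in (0:ℝ)..s, φ x ^ 2
    linarith
  -- monotonicity of Ψ
  have hmono : ∀ u v : ℝ, u ∈ Icc (0:ℝ) L → v ∈ Icc (0:ℝ) L → u ≤ v → Ψ u ≤ Ψ v := by
    intro u v hu hv huv
    have hadd := intervalIntegral.integral_add_adjacent_intervals
      (hφ2int 0 u h0L hu) (hφ2int u v hu hv)
    have hnn : 0 ≤ ∫ x in u..v, φ x ^ 2 :=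
      intervalIntegral.integral_nonneg huv (fun x _ => sq_nonneg _)
    show (∫ x in (0:ℝ)..u, φ x ^ 2) ≤ ∫ x in (0:ℝ)..v, φ x ^ 2
    linarith
  -- strict positivity of pieces
  have hpospart : ∀ u v : ℝ, 0 ≤ u → u < v → v ≤ L → 0 < ∫ x in u..v, φ x ^ 2 := by
    intro u v hu huv hvL
    apply intervalIntegral.intervalIntegral_pos_of_pos_on
      (hφ2int u v ⟨hu, le_trans huv.le hvL⟩ ⟨le_trans hu huv.le, hvL⟩)
      (fun x hx => pow_pos (hφpos x ⟨lt_of_le_of_lt hu hx.1, le_trans hx.2.le hvL⟩) 2) huv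
  have hT : 0 < T := hpospart 0 L le_rfl hL le_rfl
  have hΨpos : ∀ s : ℝ, 0 < s → s ≤ L → 0 < Ψ s := fun s hs hsL =>
    hpospart 0 s le_rfl hs hsL
  have hWpos : ∀ s : ℝ, 0 ≤ s → s < L → 0 < T - Ψ s := by
    intro s hs hsL
    have := hpospart s L hs hsL le_rfl
    rwa [hsplit s ⟨hs, hsL.le⟩] at this
  -- basic facts about hφ
  have hbddS : BddBelow {r : ℝ | ∃ t ∈ Ioo (0:ℝ) L,
      r = φ t ^ 2 / min (∫ x in (0:ℝ)..t, φ x ^ 2) (∫ x in t..L, φ x ^ 2)} := by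
    refine ⟨0, ?_⟩
    rintro r ⟨t, ht, rfl⟩
    exact div_nonneg (sq_nonneg _) (le_min
      (intervalIntegral.integral_nonneg ht.1.le (fun x _ => sq_nonneg _))
      (intervalIntegral.integral_nonneg ht.2.le (fun x _ => sq_nonneg _)))
  have hnn : 0 ≤ hφ := by
    apply Real.sInf_nonneg
    rintro r ⟨t, ht, rfl⟩
    exact div_nonneg (sq_nonneg _) (le_min
      (intervalIntegral.integral_nonneg ht.1.le (fun x _ => sq_nonneg _))
      (intervalIntegral.integral_nonneg ht.2.le (fun x _ => sq_nonneg _)))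
  have hle : ∀ s : ℝ, s ∈ Ioo (0:ℝ) L → hφ ≤ φ s ^ 2 / min (Ψ s) (T - Ψ s) := by
    intro s hs
    refine csInf_le hbddS ⟨s, hs, ?_⟩
    rw [hsplit s ⟨hs.1.le, hs.2.le⟩]
  rcases hnn.eq_or_lt with h0 | hpos
  · -- hφ = 0 : trivial
    rw [ge_iff_le, ← h0]
    norm_num
    exact intervalIntegral.integral_nonneg hL.le (fun x _ => by positivity)
  -- main case: find the weighted median point t₀
  have hmem : T / 2 ∈ Ioo (Ψ 0) (Ψ L) := by
    rw [hΨ0]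
    constructor <;> [linarith; linarith]
  obtain ⟨t₀, ht₀, hΨt₀⟩ := intermediate_value_Ioo hL.le hΨc hmem
  have ht₀L : t₀ ∈ Icc (0:ℝ) L := ⟨ht₀.1.le, ht₀.2.le⟩
  -- derivative of Ψ in the interior
  have hΨ' : ∀ t ∈ Ioo (0:ℝ) L, HasDerivAt Ψ (φ t ^ 2) t := by
    intro t ht
    have hca : ContinuousAt (fun x => φ x ^ 2) t :=
      ((hφc.continuousAt (Icc_mem_nhds ht.1 ht.2)).pow 2)
    have hmeas : StronglyMeasurableAtFilter (fun x => φ x ^ 2) (nhds t) volume :=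
      ContinuousOn.stronglyMeasurableAtFilter isOpen_Ioo
        ((hφ2c.mono Ioo_subset_Icc_self)) t ht
    exact intervalIntegral.integral_hasDerivAt_right (hφ2int 0 t h0L ⟨ht.1.le, ht.2.le⟩)
      hmeas hca
  -- the shifted function g
  set c : ℝ := f t₀ with hcdef
  set g : ℝ → ℝ := fun x => f x - c with hgdef
  have hg : ContDiff ℝ 1 g := hf.sub contDiff_const
  have hgt₀ : g t₀ = 0 := by simp [hgdef, hcdef]
  have hderiv : ∀ x : ℝ, deriv g x = deriv f x := fun x => by
    rw [hgdef]; exact deriv_sub_const c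
  -- right-side bound on the weight
  have hrightb : ∀ s ∈ Icc t₀ L, hφ * |T - Ψ s| ≤ φ s ^ 2 := by
    intro s hs
    rcases eq_or_lt_of_le hs.2 with hsL | hsL
    · rw [hsL]
      simp [hTdef]
      positivity
    · have hs0 : 0 < s := lt_of_lt_of_le ht₀.1 hs.1
      have hWp : 0 < T - Ψ s := hWpos s hs0.le hsL
      have hΨb : Ψ t₀ ≤ Ψ s := hmono t₀ s ht₀L ⟨hs0.le, hsL.le⟩ hs.1
      have hminR : min (Ψ s) (T - Ψ s) = T - Ψ s := by
        apply min_eq_right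
        rw [hΨt₀] at hΨb
        linarith
      have hineq := hle s ⟨hs0, hsL⟩
      rw [hminR] at hineq
      rw [abs_of_pos hWp]
      calc hφ * (T - Ψ s) ≤ φ s ^ 2 / (T - Ψ s) * (T - Ψ s) :=
            mul_le_mul_of_nonneg_right hineq hWp.le
        _ = φ s ^ 2 := div_mul_cancel₀ _ hWp.ne'
  -- left-side bound on the weight
  have hleftb : ∀ s ∈ Icc (0:ℝ) t₀, hφ * |(-Ψ s)| ≤ φ s ^ 2 := by
    intro s hs
    rcases eq_or_lt_of_le hs.1 with hs0 | hs0
    · rw [← hs0]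
      simp [hΨ0]
      positivity
    · have hsL : s < L := lt_of_le_of_lt hs.2 ht₀.2
      have hΨp : 0 < Ψ s := hΨpos s hs0 hsL.le
      have hΨb : Ψ s ≤ Ψ t₀ := hmono s t₀ ⟨hs0.le, hsL.le⟩ ht₀L hs.2
      have hminL : min (Ψ s) (T - Ψ s) = Ψ s := by
        apply min_eq_left
        rw [hΨt₀] at hΨb
        linarith
      have hineq := hle s ⟨hs0, hsL⟩
      rw [hminL] at hineq
      rw [abs_neg, abs_of_pos hΨp]
      calc hφ * Ψ s ≤ φ s ^ 2 / Ψ s * Ψ s :=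
            mul_le_mul_of_nonneg_right hineq hΨp.le
        _ = φ s ^ 2 := div_mul_cancel₀ _ hΨp.ne'
  -- apply the one-sided lemma on [t₀, L]
  have hsubR : Icc t₀ L ⊆ Icc 0 L := Icc_subset_Icc ht₀.1.le le_rfl
  have hsubL : Icc (0:ℝ) t₀ ⊆ Icc 0 L := Icc_subset_Icc le_rfl ht₀.2.le
  have hR := cheeger_side hφ t₀ L ht₀.2 hpos φ g (fun s => T - Ψ s)
    (hφc.mono hsubR) hg (continuousOn_const.sub (hΨc.mono hsubR))
    (fun t ht => by
      have := ((hasDerivAt_const t T).sub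
        (hΨ' t ⟨lt_trans ht₀.1 ht.1, ht.2⟩))
      rw [zero_sub] at this
      exact this)
    hrightb
    (by
      have hΨL : Ψ L = T := hTdef.symm
      simp [hgt₀, hΨL])
  have hLft := cheeger_side hφ 0 t₀ ht₀.1 hpos φ g (fun s => -Ψ s)
    (hφc.mono hsubL) hg ((hΨc.mono hsubL).neg)
    (fun t ht => by
      have := (hΨ' t ⟨ht.1, lt_trans ht.2 ht₀.2⟩).neg
      exact this)
    hleftb
    (by simp [hgt₀, hΨ0])
  -- integrability facts on [0, L]
  have hgc : Continuous g := hg.continuous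
  have hg'c : Continuous (deriv g) := hg.continuous_deriv le_rfl
  have hintAB : ∀ u v : ℝ, u ∈ Icc (0:ℝ) L → v ∈ Icc (0:ℝ) L →
      IntervalIntegrable (fun x => g x ^ 2 * φ x ^ 2) volume u v := by
    intro u v hu hv
    exact (((hgc.continuousOn).pow 2).mul
      (hφ2c.mono (uIcc_subset_Icc hu hv))).intervalIntegrable
  have hintD : ∀ u v : ℝ, u ∈ Icc (0:ℝ) L → v ∈ Icc (0:ℝ) L →
      IntervalIntegrable (fun x => (deriv g x) ^ 2 * φ x ^ 2) volume u v := by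
    intro u v hu hv
    exact (((hg'c.continuousOn).pow 2).mul
      (hφ2c.mono (uIcc_subset_Icc hu hv))).intervalIntegrable
  have haddA := intervalIntegral.integral_add_adjacent_intervals
    (hintAB 0 t₀ h0L ht₀L) (hintAB t₀ L ht₀L hLL)
  have haddD := intervalIntegral.integral_add_adjacent_intervals
    (hintD 0 t₀ h0L ht₀L) (hintD t₀ L ht₀L hLL)
  -- compare ∫ f² φ² with ∫ g² φ²
  have hfc : Continuous f := hf.continuous
  have if2 : IntervalIntegrable (fun x => f x ^ 2 * φ x ^ 2) volume 0 L :=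
    (((hfc.continuousOn).pow 2).mul (hφ2c.mono (uIcc_subset_Icc h0L hLL))).intervalIntegrable
  have if1 : IntervalIntegrable (fun x => f x * φ x ^ 2) volume 0 L :=
    ((hfc.continuousOn).mul (hφ2c.mono (uIcc_subset_Icc h0L hLL))).intervalIntegrable
  have if0 : IntervalIntegrable (fun x => φ x ^ 2) volume 0 L := hφ2int 0 L h0L hLL
  have hgexp : (∫ x in (0:ℝ)..L, g x ^ 2 * φ x ^ 2)
      = ∫ x in (0:ℝ)..L, (f x ^ 2 * φ x ^ 2 - 2 * c * (f x * φ x ^ 2) + c ^ 2 * φ x ^ 2) := by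
    apply intervalIntegral.integral_congr
    intro x _
    simp only [hgdef]
    ring
  have hgval : (∫ x in (0:ℝ)..L, g x ^ 2 * φ x ^ 2)
      = (∫ x in (0:ℝ)..L, f x ^ 2 * φ x ^ 2) + c ^ 2 * T := by
    rw [hgexp, intervalIntegral.integral_add ((if2.sub (if1.const_mul _)))
      (if0.const_mul _), intervalIntegral.integral_sub if2 (if1.const_mul _),
      intervalIntegral.integral_const_mul, intervalIntegral.integral_const_mul, hperp]
    have hTi : (∫ x in (0:ℝ)..L, φ x ^ 2) = T := rfl
    rw [hTi]
    ring
  have hcomp : (∫ x in (0:ℝ)..L, f x ^ 2 * φ x ^ 2)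
      ≤ ∫ x in (0:ℝ)..L, g x ^ 2 * φ x ^ 2 := by
    rw [hgval]
    nlinarith [sq_nonneg c, hT]
  -- rewrite derivatives and conclude
  have hDeq : (∫ x in (0:ℝ)..L, (deriv g x) ^ 2 * φ x ^ 2)
      = ∫ x in (0:ℝ)..L, (deriv f x) ^ 2 * φ x ^ 2 := by
    apply intervalIntegral.integral_congr
    intro x _
    simp only [hderiv]
  have hfinal : hφ ^ 2 / 4 * ∫ x in (0:ℝ)..L, g x ^ 2 * φ x ^ 2
      ≤ ∫ x in (0:ℝ)..L, (deriv f x) ^ 2 * φ x ^ 2 := by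
    rw [← hDeq, ← haddA, ← haddD]
    have := add_le_add hLft hR
    linarith [this]
  rw [ge_iff_le]
  calc hφ ^ 2 / 4 * ∫ x in (0:ℝ)..L, f x ^ 2 * φ x ^ 2
      ≤ hφ ^ 2 / 4 * ∫ x in (0:ℝ)..L, g x ^ 2 * φ x ^ 2 :=
        mul_le_mul_of_nonneg_left hcomp (by positivity)
    _ ≤ _ := hfinal
end

section
/- The function f(x) = sin²(σx) / ∫₀ˣ sin²(σt) dt = 2sin²(σx)/(x − sin(2σx)/(2σ)) is strictly decreasing on (0, π/σ) for any σ > 0. -/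
open Real Set

lemma mul_cos_lt_sin {s : ℝ} (h0 : 0 < s) (hπ : s < π) : s * Real.cos s < Real.sin s := by
  have hsin : 0 < Real.sin s := Real.sin_pos_of_pos_of_lt_pi h0 hπ
  rcases le_or_gt (Real.cos s) 0 with hc | hc
  · nlinarith
  · have hs2 : s < π / 2 := by
      by_contra h
      push_neg at h
      have : Real.cos s ≤ 0 := Real.cos_nonpos_of_pi_div_two_le_of_le h (by linarith [Real.pi_pos])
      linarith
    have := Real.lt_tan h0 hs2
    rw [Real.tan_eq_sin_div_cos] at this
    calc s * Real.cos s < (Real.sin s / Real.cos s) * Real.cos s := by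
          exact mul_lt_mul_of_pos_right this hc
      _ = Real.sin s := by field_simp

/-- The function `x ↦ sin²(σx) / (x/2 - sin(2σx)/(4σ))`, i.e.
`sin²(σx)/∫₀ˣ sin²(σt) dt`, is strictly decreasing on `(0, π/σ)` for `σ > 0`. -/
theorem sine_ratio_strictAnti (σ : ℝ) (hσ : 0 < σ) :
    StrictAntiOn
      (fun x : ℝ => Real.sin (σ * x) ^ 2 / (x / 2 - Real.sin (2 * σ * x) / (4 * σ)))
      (Ioo 0 (π / σ)) := by
  have hσ' : σ ≠ 0 := ne_of_gt hσ
  have hD : ∀ x ∈ Ioo (0:ℝ) (π / σ), 0 < x / 2 - Real.sin (2 * σ * x) / (4 * σ) := by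
    intro x hx
    have hx0 : 0 < x := hx.1
    have h1 : Real.sin (2 * σ * x) < 2 * σ * x := Real.sin_lt (by positivity)
    rw [sub_pos, div_lt_div_iff₀ (by positivity) (by norm_num)]
    nlinarith
  apply strictAntiOn_of_deriv_neg (convex_Ioo _ _)
  · apply ContinuousOn.div (by fun_prop) (by fun_prop)
    intro x hx
    exact ne_of_gt (hD x hx)
  · intro x hx
    rw [interior_Ioo] at hx
    have hx0 : 0 < x := hx.1
    have hs0 : 0 < σ * x := by positivity
    have hsπ : σ * x < π := by
      have := hx.2
      rw [lt_div_iff₀ hσ] at this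
      linarith
    have hsin : 0 < Real.sin (σ * x) := Real.sin_pos_of_pos_of_lt_pi hs0 hsπ
    have hkey : (σ * x) * Real.cos (σ * x) < Real.sin (σ * x) := mul_cos_lt_sin hs0 hsπ
    -- derivatives
    have h1 : HasDerivAt (fun x : ℝ => σ * x) σ x := by
      simpa using (hasDerivAt_id x).const_mul σ
    have hu : HasDerivAt (fun x : ℝ => Real.sin (σ * x) ^ 2)
        (2 * Real.sin (σ * x) ^ 1 * (Real.cos (σ * x) * σ)) x := (h1.sin).pow 2
    have h2 : HasDerivAt (fun x : ℝ => 2 * σ * x) (2 * σ) x := by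
      simpa using (hasDerivAt_id x).const_mul (2 * σ)
    have hv : HasDerivAt (fun x : ℝ => x / 2 - Real.sin (2 * σ * x) / (4 * σ))
        (1 / 2 - Real.cos (2 * σ * x) * (2 * σ) / (4 * σ)) x := by
      have := ((h2.sin).div_const (4 * σ))
      exact ((hasDerivAt_id x).div_const 2).sub this
    have hDx := hD x hx
    have hne : x / 2 - Real.sin (2 * σ * x) / (4 * σ) ≠ 0 := ne_of_gt hDx
    have hf : HasDerivAt (fun x : ℝ => Real.sin (σ * x) ^ 2 / (x / 2 - Real.sin (2 * σ * x) / (4 * σ))) _ x := hu.div hv hne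
    rw [hf.deriv]
    apply div_neg_of_neg_of_pos _ (by positivity)
    have h2s : 2 * σ * x = 2 * (σ * x) := by ring
    have pyth := Real.sin_sq_add_cos_sq (σ * x)
    have hnum : 2 * Real.sin (σ * x) ^ 1 * (Real.cos (σ * x) * σ) *
          (x / 2 - Real.sin (2 * σ * x) / (4 * σ)) -
        Real.sin (σ * x) ^ 2 * (1 / 2 - Real.cos (2 * σ * x) * (2 * σ) / (4 * σ)) =
        Real.sin (σ * x) * ((σ * x) * Real.cos (σ * x) - Real.sin (σ * x)) := by
      rw [h2s, Real.sin_two_mul, Real.cos_two_mul]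
      field_simp
      nlinarith [pyth]
    rw [hnum]
    apply mul_neg_of_pos_of_neg hsin
    linarith
end
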